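/- arXiv:2601.05526 — 5 statements merged into one kernel-verified Lean document; each statement's English description precedes it below -/
import Mathlib

section
/- Let G be an n×n real matrix and P an n×n symmetric positive definite matrix such that P·G + Gᵀ·P ≻ 0. Then for the one-parameter group d(s) = exp(s·G) and the norm ‖x‖ = √(xᵀ P x), there exists β > 0 such that ‖d(s)‖ ≤ e^{β s} for all s ≤ 0, where ‖d(s)‖ is the operator norm induced by ‖·‖. -/
open Matrix

/-- The weighted Euclidean norm `‖x‖ = √(xᵀ P x)`. -/
noncomputable def wnorm {n : ℕ} (P : Matrix (Fin n) (Fin n) ℝ) (x : Fin n → ℝ) : ℝ :=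
  Real.sqrt (x ⬝ᵥ P.mulVec x)

/-- The operator norm induced by the weighted Euclidean norm `wnorm P`. -/
noncomputable def wopNorm {n : ℕ} (P A : Matrix (Fin n) (Fin n) ℝ) : ℝ :=
  sSup {c : ℝ | ∃ x : Fin n → ℝ, x ≠ 0 ∧ c = wnorm P (A.mulVec x) / wnorm P x}

/-!
Along a trajectory `y(t) = exp(tG) x` the quadratic form `V(t) = yᵀ P y` has derivative
`yᵀ (P G + Gᵀ P) y`, and comparing the two positive definite forms on the (compact) unit sphere
gives `c > 0` with `V' ≥ c V`. Hence `e^{-ct} V(t)` is nondecreasing, so `V(s) ≤ e^{cs} V(0)` for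
`s ≤ 0`, i.e. `‖exp(sG) x‖ ≤ e^{cs/2} ‖x‖`, and `β = c / 2` works.
-/

theorem le_exp_mul_sub_mul_of_mul_le_deriv {φ φ' : ℝ → ℝ} {c : ℝ}
    (hφ : ∀ t, HasDerivAt φ (φ' t) t) (hle : ∀ t, c * φ t ≤ φ' t) {s t : ℝ} (hst : s ≤ t) :
    φ s ≤ Real.exp (c * (s - t)) * φ t := by
  have hmono : Monotone fun u => Real.exp (-c * u) * φ u := by
    refine monotone_of_hasDerivAt_nonneg
      (fun u => (((hasDerivAt_id u).const_mul (-c)).exp).mul (hφ u)) fun u => ?_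
    have := mul_le_mul_of_nonneg_left (hle u) (Real.exp_pos (-c * u)).le
    simp only [id_eq, mul_one, Pi.zero_apply]
    linarith
  calc φ s = Real.exp (c * s) * (Real.exp (-c * s) * φ s) := by
        rw [← mul_assoc, ← Real.exp_add]; simp
    _ ≤ Real.exp (c * s) * (Real.exp (-c * t) * φ t) :=
        mul_le_mul_of_nonneg_left (hmono hst) (Real.exp_pos _).le
    _ = Real.exp (c * (s - t)) * φ t := by rw [← mul_assoc, ← Real.exp_add]; ring_nf

section QuadraticForm

variable {ι : Type*} [Fintype ι]

theorem HasDerivAt.dotProduct {u v : ℝ → ι → ℝ} {u' v' : ι → ℝ} {t : ℝ}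
    (hu : HasDerivAt u u' t) (hv : HasDerivAt v v' t) :
    HasDerivAt (fun t => u t ⬝ᵥ v t) (u t ⬝ᵥ v' + u' ⬝ᵥ v t) t :=
  ContinuousLinearMap.hasDerivAt_of_bilinear (fun _ => hu) (fun _ => hv)
    (B := (dotProductBilin ℝ ℝ : (ι → ℝ) →ₗ[ℝ] (ι → ℝ) →ₗ[ℝ] ℝ).toContinuousBilinearMap)

open scoped Matrix.Norms.Operator in
theorem HasDerivAt.mulVec {κ : Type*} [Fintype κ] {M : ℝ → Matrix κ ι ℝ} {M' : Matrix κ ι ℝ}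
    {u : ℝ → ι → ℝ} {u' : ι → ℝ} {t : ℝ} (hM : HasDerivAt M M' t) (hu : HasDerivAt u u' t) :
    HasDerivAt (fun t => M t *ᵥ u t) (M t *ᵥ u' + M' *ᵥ u t) t :=
  ContinuousLinearMap.hasDerivAt_of_bilinear (fun _ => hM) (fun _ => hu)
    (B := (mulVecBilin ℝ ℝ : Matrix κ ι ℝ →ₗ[ℝ] (ι → ℝ) →ₗ[ℝ] κ → ℝ).toContinuousBilinearMap)

theorem hasDerivAt_exp_smul_mulVec [DecidableEq ι] (G : Matrix ι ι ℝ) (x : ι → ℝ) (t : ℝ) :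
    HasDerivAt (fun t : ℝ => NormedSpace.exp (t • G) *ᵥ x)
      (G *ᵥ (NormedSpace.exp (t • G) *ᵥ x)) t := by
  open scoped Matrix.Norms.Operator in
  have h := (hasDerivAt_exp_smul_const' G t).mulVec (hasDerivAt_const t x)
  rwa [mulVec_zero, zero_add, ← mulVec_mulVec] at h

theorem continuous_dotProduct_mulVec_self (A : Matrix ι ι ℝ) :
    Continuous fun x : ι → ℝ => x ⬝ᵥ A *ᵥ x := by
  simp only [dotProduct, mulVec]
  fun_prop

theorem smul_dotProduct_mulVec_smul (A : Matrix ι ι ℝ) (c : ℝ) (x : ι → ℝ) :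
    c • x ⬝ᵥ A *ᵥ (c • x) = c ^ 2 * (x ⬝ᵥ A *ᵥ x) := by
  rw [mulVec_smul, smul_dotProduct, dotProduct_smul, smul_eq_mul, smul_eq_mul, sq, mul_assoc]

theorem dotProduct_mulVec_mulVec_add_mulVec_dotProduct_mulVec (G P : Matrix ι ι ℝ) (x : ι → ℝ) :
    x ⬝ᵥ P *ᵥ (G *ᵥ x) + G *ᵥ x ⬝ᵥ P *ᵥ x = x ⬝ᵥ (P * G + Gᵀ * P) *ᵥ x := by
  rw [add_mulVec, dotProduct_add, ← mulVec_mulVec, ← mulVec_mulVec, dotProduct_mulVec x Gᵀ,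
    vecMul_transpose]

theorem Matrix.PosDef.exists_pos_mul_le {P Q : Matrix ι ι ℝ} (hP : P.PosDef) (hQ : Q.PosDef) :
    ∃ c > 0, ∀ x : ι → ℝ, c * (x ⬝ᵥ P *ᵥ x) ≤ x ⬝ᵥ Q *ᵥ x := by
  cases isEmpty_or_nonempty ι
  · exact ⟨1, one_pos, fun x => by simp [Subsingleton.elim x 0]⟩
  set ratio : (ι → ℝ) → ℝ := fun x => (x ⬝ᵥ Q *ᵥ x) / (x ⬝ᵥ P *ᵥ x)
  have hP_pos : ∀ x ∈ Metric.sphere (0 : ι → ℝ) 1, 0 < x ⬝ᵥ P *ᵥ x := fun x hx =>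
    hP.dotProduct_mulVec_pos (ne_zero_of_mem_unit_sphere ⟨x, hx⟩)
  obtain ⟨v, hv, hmin⟩ := (isCompact_sphere (0 : ι → ℝ) 1).exists_isMinOn
    (NormedSpace.sphere_nonempty.2 zero_le_one)
    ((continuous_dotProduct_mulVec_self Q).continuousOn.div
      (continuous_dotProduct_mulVec_self P).continuousOn fun x hx => (hP_pos x hx).ne')
  refine ⟨ratio v, div_pos (hQ.dotProduct_mulVec_pos (ne_zero_of_mem_unit_sphere ⟨v, hv⟩))
    (hP_pos v hv), fun x => ?_⟩
  rcases eq_or_ne x 0 with rfl | hx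
  · simp
  have hx_sphere : ‖x‖⁻¹ • x ∈ Metric.sphere (0 : ι → ℝ) 1 := by simp [norm_smul, hx]
  have hratio : ratio (‖x‖⁻¹ • x) = ratio x := by
    simp only [ratio, smul_dotProduct_mulVec_smul]
    exact mul_div_mul_left _ _ (by positivity)
  have hPx : 0 < x ⬝ᵥ P *ᵥ x := hP.dotProduct_mulVec_pos hx
  rw [← le_div_iff₀ hPx]
  exact (hmin hx_sphere).trans_eq hratio

theorem exp_smul_mulVec_dotProduct_le [DecidableEq ι] {G P : Matrix ι ι ℝ} {c : ℝ}
    (hc : ∀ y : ι → ℝ, c * (y ⬝ᵥ P *ᵥ y) ≤ y ⬝ᵥ (P * G + Gᵀ * P) *ᵥ y)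
    (x : ι → ℝ) {s : ℝ} (hs : s ≤ 0) :
    NormedSpace.exp (s • G) *ᵥ x ⬝ᵥ P *ᵥ (NormedSpace.exp (s • G) *ᵥ x) ≤
      Real.exp (c * s) * (x ⬝ᵥ P *ᵥ x) := by
  set v : ℝ → ι → ℝ := fun t => NormedSpace.exp (t • G) *ᵥ x
  have hv (t : ℝ) : HasDerivAt v (G *ᵥ v t) t := hasDerivAt_exp_smul_mulVec G x t
  have hφ (t : ℝ) : HasDerivAt (fun t => v t ⬝ᵥ P *ᵥ v t)
      (v t ⬝ᵥ (P * G + Gᵀ * P) *ᵥ v t) t := by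
    open scoped Matrix.Norms.Operator in
    have := (hv t).dotProduct ((hasDerivAt_const t P).mulVec (hv t))
    rwa [zero_mulVec, add_zero, dotProduct_mulVec_mulVec_add_mulVec_dotProduct_mulVec] at this
  simpa [v] using le_exp_mul_sub_mul_of_mul_le_deriv hφ (fun t => hc (v t)) hs

end QuadraticForm

theorem wnorm_exp_smul_mulVec_le {n : ℕ} {G P : Matrix (Fin n) (Fin n) ℝ} {c : ℝ}
    (hc : ∀ y : Fin n → ℝ, c * (y ⬝ᵥ P *ᵥ y) ≤ y ⬝ᵥ (P * G + Gᵀ * P) *ᵥ y)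
    (x : Fin n → ℝ) {s : ℝ} (hs : s ≤ 0) :
    wnorm P (NormedSpace.exp (s • G) *ᵥ x) ≤ Real.exp (c / 2 * s) * wnorm P x := by
  have hexp : Real.sqrt (Real.exp (c * s)) = Real.exp (c / 2 * s) := by
    rw [Real.sqrt_eq_iff_mul_self_eq (Real.exp_pos _).le (Real.exp_pos _).le, ← Real.exp_add]
    ring_nf
  rw [wnorm, wnorm, ← hexp, ← Real.sqrt_mul (Real.exp_pos _).le]
  exact Real.sqrt_le_sqrt (exp_smul_mulVec_dotProduct_le hc x hs)

theorem wopNorm_le_of_forall_wnorm_le {n : ℕ} {P A : Matrix (Fin n) (Fin n) ℝ} {C : ℝ} (hC : 0 ≤ C) (h : ∀ x, wnorm P (A *ᵥ x) ≤ C * wnorm P x) : wopNorm P A ≤ C := by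
  refine Real.sSup_le ?_ hC
  rintro _ ⟨x, hx, rfl⟩
  exact div_le_of_le_mul₀ (Real.sqrt_nonneg _) hC (h x)

theorem dilation_strictly_monotone_general {n : ℕ} (G P : Matrix (Fin n) (Fin n) ℝ)
    (hP : P.PosDef) (hPG : (P * G + Gᵀ * P).PosDef) :
    ∃ β > 0, ∀ s : ℝ, s ≤ 0 →
      wopNorm P (NormedSpace.exp (s • G)) ≤ Real.exp (β * s) := by
  obtain ⟨c, hc_pos, hc⟩ := hP.exists_pos_mul_le hPG
  exact ⟨c / 2, half_pos hc_pos, fun s hs =>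
    wopNorm_le_of_forall_wnorm_le (Real.exp_pos _).le fun x => wnorm_exp_smul_mulVec_le hc x hs⟩

/-- Strict monotonicity of the dilation `d(s) = exp(sG)`: if `P ≻ 0` is symmetric and
`P G + Gᵀ P ≻ 0`, then there is `β > 0` with `‖d(s)‖ ≤ e^{β s}` for all `s ≤ 0`,
the operator norm being induced by `‖x‖ = √(xᵀ P x)`. -/
theorem dilation_strictly_monotone {n : ℕ} (G P : Matrix (Fin n) (Fin n) ℝ)
    (hPsym : Pᵀ = P) (hP : P.PosDef) (hPG : (P * G + Gᵀ * P).PosDef) :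
    ∃ β > 0, ∀ s : ℝ, s ≤ 0 →
      wopNorm P (NormedSpace.exp (s • G)) ≤ Real.exp (β * s) :=
  dilation_strictly_monotone_general G P hP hPG
end

section
/- Let d be a one-parameter group of invertible linear maps on ℝⁿ, strictly monotone with respect to a norm ‖·‖, and let ‖·‖_d be the canonical homogeneous norm defined by ‖x‖_d = e^s where s is the unique real with ‖d(−s)x‖ = 1 (for x ≠ 0) and ‖0‖_d = 0. If η̲ and η̄ are the monotonicity constants (0 < η̲ ≤ η̄) from the operator-norm bounds e^{η̲ s} ≤ |⌊d(s)⌋| and ‖d(s)‖ ≤ e^{η̄ s} for s ≥ 0, then for all x with ‖x‖ ≥ 1 one has ‖x‖_d^{η̲} ≤ ‖x‖ ≤ ‖x‖_d^{η̄}, and for all x with ‖x‖ ≤ 1 one has ‖x‖_d^{η̄} ≤ ‖x‖ ≤ ‖x‖_d^{η̲}. -/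
open Matrix

/-!
Write `s = ln ‖x‖_d`, so that `x = d(s) y` with `‖y‖ = 1` and `‖x‖_d ^ η = e^{η s}`.
For `s ≥ 0` the monotonicity bounds applied to `d(s) y` give `e^{η̲ s} ≤ ‖x‖ ≤ e^{η̄ s}`;
for `s ≤ 0` they apply to `y = d(-s) x` and give `e^{η̄ s} ≤ ‖x‖ ≤ e^{η̲ s}`.
Since `η̲ > 0`, these bounds also force `s ≥ 0` when `‖x‖ ≥ 1` and `s ≤ 0` when `‖x‖ ≤ 1`.
-/

namespace MonotoneDilation

variable {E : Type*} {T : ℝ → E → E} {N : E → ℝ} {ηund ηbar s : ℝ} {x : E}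

theorem exp_le_and_le_exp_of_nonneg (hinv : ∀ s x, T s (T (-s) x) = x)
    (hlower : ∀ s, 0 ≤ s → ∀ x, Real.exp (ηund * s) * N x ≤ N (T s x))
    (hupper : ∀ s, 0 ≤ s → ∀ x, N (T s x) ≤ Real.exp (ηbar * s) * N x)
    (hs : 0 ≤ s) (hx : N (T (-s) x) = 1) :
    Real.exp (ηund * s) ≤ N x ∧ N x ≤ Real.exp (ηbar * s) := by
  have hlo := hlower s hs (T (-s) x)
  have hup := hupper s hs (T (-s) x)
  rw [hinv, hx, mul_one] at hlo hup
  exact ⟨hlo, hup⟩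

theorem exp_le_and_le_exp_of_nonpos
    (hlower : ∀ s, 0 ≤ s → ∀ x, Real.exp (ηund * s) * N x ≤ N (T s x))
    (hupper : ∀ s, 0 ≤ s → ∀ x, N (T s x) ≤ Real.exp (ηbar * s) * N x)
    (hs : s ≤ 0) (hx : N (T (-s) x) = 1) :
    Real.exp (ηbar * s) ≤ N x ∧ N x ≤ Real.exp (ηund * s) := by
  have hlo := hlower (-s) (neg_nonneg.2 hs) x
  have hup := hupper (-s) (neg_nonneg.2 hs) x
  rw [hx] at hlo hup
  have hexp : ∀ η, Real.exp (η * s) * Real.exp (η * -s) = 1 := fun η => by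
    rw [← Real.exp_add, mul_neg, add_neg_cancel, Real.exp_zero]
  constructor
  · calc Real.exp (ηbar * s) = Real.exp (ηbar * s) * 1 := (mul_one _).symm
      _ ≤ Real.exp (ηbar * s) * (Real.exp (ηbar * -s) * N x) := by gcongr
      _ = N x := by rw [← mul_assoc, hexp, one_mul]
  · calc N x = Real.exp (ηund * s) * (Real.exp (ηund * -s) * N x) := by
          rw [← mul_assoc, hexp, one_mul]
      _ ≤ Real.exp (ηund * s) * 1 := by gcongr
      _ = Real.exp (ηund * s) := mul_one _

theorem nonneg_of_one_le
    (hlower : ∀ s, 0 ≤ s → ∀ x, Real.exp (ηund * s) * N x ≤ N (T s x))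
    (hηund : 0 < ηund) (hx : N (T (-s) x) = 1) (hNx : 1 ≤ N x) : 0 ≤ s := by
  by_contra! hs
  have hgt : 1 < Real.exp (ηund * -s) := Real.one_lt_exp_iff.2 (mul_pos hηund (neg_pos.2 hs))
  have hlo := hlower (-s) (neg_nonneg.2 hs.le) x
  rw [hx] at hlo
  nlinarith

theorem nonpos_of_le_one (hinv : ∀ s x, T s (T (-s) x) = x)
    (hlower : ∀ s, 0 ≤ s → ∀ x, Real.exp (ηund * s) * N x ≤ N (T s x))
    (hηund : 0 < ηund) (hx : N (T (-s) x) = 1) (hNx : N x ≤ 1) : s ≤ 0 := by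
  by_contra! hs
  have hgt : 1 < Real.exp (ηund * s) := Real.one_lt_exp_iff.2 (mul_pos hηund hs)
  have hlo := hlower s hs.le (T (-s) x)
  rw [hinv, hx, mul_one] at hlo
  linarith

end MonotoneDilation

open MonotoneDilation

theorem hom_norm_vs_norm_general {n : ℕ} (d : ℝ → Matrix (Fin n) (Fin n) ℝ)
    (hd0 : d 0 = 1) (hdadd : ∀ s t : ℝ, d (s + t) = d s * d t)
    (N : (Fin n → ℝ) → ℝ)
    (hN0 : ∀ x : Fin n → ℝ, N x = 0 ↔ x = 0)
    (hnorm : (Fin n → ℝ) → ℝ)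
    (hhnorm0 : hnorm 0 = 0)
    (hhnorm : ∀ x : Fin n → ℝ, x ≠ 0 →
      0 < hnorm x ∧ N ((d (-(Real.log (hnorm x)))).mulVec x) = 1)
    (ηund ηbar : ℝ) (h0 : 0 < ηund) (hle : ηund ≤ ηbar)
    (hlower : ∀ s : ℝ, 0 ≤ s → ∀ x : Fin n → ℝ,
      Real.exp (ηund * s) * N x ≤ N ((d s).mulVec x))
    (hupper : ∀ s : ℝ, 0 ≤ s → ∀ x : Fin n → ℝ,
      N ((d s).mulVec x) ≤ Real.exp (ηbar * s) * N x) :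
    ∀ x : Fin n → ℝ,
      (1 ≤ N x → Real.rpow (hnorm x) ηund ≤ N x ∧ N x ≤ Real.rpow (hnorm x) ηbar) ∧
      (N x ≤ 1 → Real.rpow (hnorm x) ηbar ≤ N x ∧ N x ≤ Real.rpow (hnorm x) ηund) := by
  intro x
  rcases eq_or_ne x 0 with rfl | hx
  · have hN : N 0 = 0 := (hN0 0).2 rfl
    simp only [hN, hhnorm0, Real.rpow_eq_pow, Real.zero_rpow h0.ne',
      Real.zero_rpow (h0.trans_le hle).ne']
    norm_num
  have hinv : ∀ s x, (d s).mulVec ((d (-s)).mulVec x) = x := fun s x => by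
    rw [mulVec_mulVec, ← hdadd, add_neg_cancel, hd0, one_mulVec]
  obtain ⟨hpos, hone⟩ := hhnorm x hx
  have hrpow : ∀ η, Real.rpow (hnorm x) η = Real.exp (η * Real.log (hnorm x)) := fun η => by
    rw [Real.rpow_eq_pow, Real.rpow_def_of_pos hpos, mul_comm]
  simp only [hrpow]
  exact ⟨fun hNx => exp_le_and_le_exp_of_nonneg hinv hlower hupper
      (nonneg_of_one_le hlower h0 hone hNx) hone,
    fun hNx => exp_le_and_le_exp_of_nonpos hlower hupper
      (nonpos_of_le_one hinv hlower h0 hone hNx) hone⟩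

/-- Relation between the canonical homogeneous norm `hnorm = ‖·‖_d` and the underlying
norm `N = ‖·‖` for a strictly monotone one-parameter group of invertible linear maps
`d`, with monotonicity constants `0 < η̲ ≤ η̄`:
for `‖x‖ ≥ 1`, `‖x‖_d^η̲ ≤ ‖x‖ ≤ ‖x‖_d^η̄`, and for `‖x‖ ≤ 1`,
`‖x‖_d^η̄ ≤ ‖x‖ ≤ ‖x‖_d^η̲`. -/
theorem hom_norm_vs_norm {n : ℕ} (d : ℝ → Matrix (Fin n) (Fin n) ℝ)
    (hd0 : d 0 = 1) (hdadd : ∀ s t : ℝ, d (s + t) = d s * d t)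
    (hdinv : ∀ s : ℝ, IsUnit (d s))
    (N : (Fin n → ℝ) → ℝ)
    (hN0 : ∀ x : Fin n → ℝ, N x = 0 ↔ x = 0) (hNpos : ∀ x : Fin n → ℝ, 0 ≤ N x)
    (hnorm : (Fin n → ℝ) → ℝ)
    (hhnorm0 : hnorm 0 = 0)
    (hhnorm : ∀ x : Fin n → ℝ, x ≠ 0 →
      0 < hnorm x ∧ N ((d (-(Real.log (hnorm x)))).mulVec x) = 1)
    (ηund ηbar : ℝ) (h0 : 0 < ηund) (hle : ηund ≤ ηbar)
    (hlower : ∀ s : ℝ, 0 ≤ s → ∀ x : Fin n → ℝ,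
      Real.exp (ηund * s) * N x ≤ N ((d s).mulVec x))
    (hupper : ∀ s : ℝ, 0 ≤ s → ∀ x : Fin n → ℝ,
      N ((d s).mulVec x) ≤ Real.exp (ηbar * s) * N x) :
    ∀ x : Fin n → ℝ,
      (1 ≤ N x → Real.rpow (hnorm x) ηund ≤ N x ∧ N x ≤ Real.rpow (hnorm x) ηbar) ∧
      (N x ≤ 1 → Real.rpow (hnorm x) ηbar ≤ N x ∧ N x ≤ Real.rpow (hnorm x) ηund) :=
  hom_norm_vs_norm_general d hd0 hdadd N hN0 hnorm hhnorm0 hhnorm ηund ηbar h0 hle hlower hupper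
end

section
/- Let d(s) = exp(sG) be a strictly monotone linear dilation with canonical homogeneous norm ‖·‖_d induced by ‖x‖ = √(xᵀPx). Define Φ_d(x) = ‖x‖_d · d(−ln‖x‖_d)·x for x ≠ 0 and Φ_d(0) = 0, and Ψ(z) = ‖z‖^{-1} · d(ln‖z‖)·z for z ≠ 0, Ψ(0) = 0. Then Ψ(Φ_d(x)) = x for all x ∈ ℝⁿ and Φ_d(Ψ(z)) = z for all z ∈ ℝⁿ; i.e., Φ_d is a bijection of ℝⁿ with inverse Ψ. -/
open Matrix

/-- The homogeneous coordinate map `Φ_d(x) = ‖x‖_d · d(−ln‖x‖_d)·x`, `Φ_d(0)=0`. -/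
noncomputable def Phi {n : ℕ} (G : Matrix (Fin n) (Fin n) ℝ)
    (hnorm : (Fin n → ℝ) → ℝ) (x : Fin n → ℝ) : Fin n → ℝ :=
  if x = 0 then 0 else
    hnorm x • (NormedSpace.exp ((-Real.log (hnorm x)) • G)).mulVec x

/-- The inverse map `Ψ(z) = ‖z‖⁻¹ · d(ln‖z‖)·z`, `Ψ(0)=0`. -/
noncomputable def Psi {n : ℕ} (G P : Matrix (Fin n) (Fin n) ℝ) (z : Fin n → ℝ) :
    Fin n → ℝ :=
  if z = 0 then 0 else
    (wnorm P z)⁻¹ • (NormedSpace.exp ((Real.log (wnorm P z)) • G)).mulVec z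

/-!
Write `d(s) = exp(sG)` and `‖·‖ = wnorm P`. For `x ≠ 0` the defining normalisation
`‖d(-ln‖x‖_d) x‖ = 1` says exactly that `‖Φ_d(x)‖ = ‖x‖_d`, so `Ψ` undoes `Φ_d` because
`d(ln r)` and `d(-ln r)` are inverse. Conversely `d(-ln‖z‖) Ψ(z) = z / ‖z‖` has norm one,
so uniqueness of the normalising parameter gives `‖Ψ(z)‖_d = ‖z‖`, and `Φ_d` undoes `Ψ`.
-/

section MatrixExp

variable {m : Type*} [Fintype m] [DecidableEq m]

theorem Matrix.exp_smul_mul_exp_neg_smul (G : Matrix m m ℝ) (a : ℝ) :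
    NormedSpace.exp (a • G) * NormedSpace.exp ((-a) • G) = 1 := by
  rw [← Matrix.exp_add_of_commute _ _ (((Commute.refl G).smul_right (-a)).smul_left a)]
  simp

theorem Matrix.exp_smul_mulVec_exp_neg_smul_mulVec (G : Matrix m m ℝ) (a : ℝ) (x : m → ℝ) :
    NormedSpace.exp (a • G) *ᵥ (NormedSpace.exp ((-a) • G) *ᵥ x) = x := by
  rw [mulVec_mulVec, Matrix.exp_smul_mul_exp_neg_smul, one_mulVec]

theorem Matrix.exp_neg_smul_mulVec_exp_smul_mulVec (G : Matrix m m ℝ) (a : ℝ) (x : m → ℝ) :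
    NormedSpace.exp ((-a) • G) *ᵥ (NormedSpace.exp (a • G) *ᵥ x) = x := by
  simpa using Matrix.exp_smul_mulVec_exp_neg_smul_mulVec G (-a) x

end MatrixExp

section WeightedNorm

variable {n : ℕ} {P : Matrix (Fin n) (Fin n) ℝ}

@[simp]
theorem wnorm_zero : wnorm P 0 = 0 := by
  simp [wnorm]

theorem wnorm_smul (c : ℝ) (v : Fin n → ℝ) : wnorm P (c • v) = |c| * wnorm P v := by
  unfold wnorm
  rw [mulVec_smul, smul_dotProduct, dotProduct_smul, smul_eq_mul, smul_eq_mul, ← mul_assoc,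
    Real.sqrt_mul (mul_self_nonneg c), Real.sqrt_mul_self_eq_abs]

theorem wnorm_pos (hP : P.PosDef) {v : Fin n → ℝ} (hv : v ≠ 0) : 0 < wnorm P v :=
  Real.sqrt_pos.mpr (by simpa using hP.dotProduct_mulVec_pos hv)

end WeightedNorm

section PhiPsi

variable {n : ℕ} {G P : Matrix (Fin n) (Fin n) ℝ} {hnorm : (Fin n → ℝ) → ℝ}

theorem wnorm_Phi {x : Fin n → ℝ} (hx : x ≠ 0) (hpos : 0 < hnorm x)
    (hdef : wnorm P (NormedSpace.exp ((-Real.log (hnorm x)) • G) *ᵥ x) = 1) :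
    wnorm P (Phi G hnorm x) = hnorm x := by
  rw [Phi, if_neg hx, wnorm_smul, hdef, mul_one, abs_of_pos hpos]

theorem exp_log_hnorm_mulVec_Phi {x : Fin n → ℝ} (hx : x ≠ 0) :
    NormedSpace.exp (Real.log (hnorm x) • G) *ᵥ Phi G hnorm x = hnorm x • x := by
  rw [Phi, if_neg hx, mulVec_smul, Matrix.exp_smul_mulVec_exp_neg_smul_mulVec]

theorem Psi_leftInverse_Phi (hpos : ∀ x : Fin n → ℝ, x ≠ 0 → 0 < hnorm x)
    (hdef : ∀ x : Fin n → ℝ, x ≠ 0 →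
      wnorm P (NormedSpace.exp ((-Real.log (hnorm x)) • G) *ᵥ x) = 1) :
    Function.LeftInverse (Psi G P) (Phi G hnorm) := by
  intro x
  rcases eq_or_ne x 0 with rfl | hx
  · simp [Phi, Psi]
  have hwnorm := wnorm_Phi hx (hpos x hx) (hdef x hx)
  have hPhi : Phi G hnorm x ≠ 0 := by
    intro h
    rw [h, wnorm_zero] at hwnorm
    exact (hpos x hx).ne hwnorm
  rw [Psi, if_neg hPhi, hwnorm, exp_log_hnorm_mulVec_Phi hx, smul_smul,
    inv_mul_cancel₀ (hpos x hx).ne', one_smul]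

theorem exp_neg_log_wnorm_mulVec_Psi {z : Fin n → ℝ} (hz : z ≠ 0) :
    NormedSpace.exp ((-Real.log (wnorm P z)) • G) *ᵥ Psi G P z = (wnorm P z)⁻¹ • z := by
  rw [Psi, if_neg hz, mulVec_smul, Matrix.exp_neg_smul_mulVec_exp_smul_mulVec]

theorem wnorm_exp_neg_log_wnorm_mulVec_Psi (hP : P.PosDef) {z : Fin n → ℝ} (hz : z ≠ 0) :
    wnorm P (NormedSpace.exp ((-Real.log (wnorm P z)) • G) *ᵥ Psi G P z) = 1 := by
  have hw := wnorm_pos hP hz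
  rw [exp_neg_log_wnorm_mulVec_Psi hz, wnorm_smul, abs_of_pos (inv_pos.mpr hw),
    inv_mul_cancel₀ hw.ne']

theorem Psi_ne_zero (hP : P.PosDef) {z : Fin n → ℝ} (hz : z ≠ 0) : Psi G P z ≠ 0 := by
  intro h
  have h1 := wnorm_exp_neg_log_wnorm_mulVec_Psi (G := G) hP hz
  rw [h, mulVec_zero, wnorm_zero] at h1
  exact zero_ne_one h1

theorem hnorm_Psi (hP : P.PosDef) {z : Fin n → ℝ} (hz : z ≠ 0)
    (hpos : 0 < hnorm (Psi G P z))
    (huniq : ∀ s : ℝ, wnorm P (NormedSpace.exp ((-s) • G) *ᵥ Psi G P z) = 1 →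
      s = Real.log (hnorm (Psi G P z))) :
    hnorm (Psi G P z) = wnorm P z := by
  have hlog := huniq _ (wnorm_exp_neg_log_wnorm_mulVec_Psi hP hz)
  rw [← Real.exp_log hpos, ← hlog, Real.exp_log (wnorm_pos hP hz)]

theorem Psi_rightInverse_Phi (hP : P.PosDef) (hpos : ∀ x : Fin n → ℝ, x ≠ 0 → 0 < hnorm x)
    (huniq : ∀ x : Fin n → ℝ, x ≠ 0 → ∀ s : ℝ,
      wnorm P (NormedSpace.exp ((-s) • G) *ᵥ x) = 1 → s = Real.log (hnorm x)) :
    Function.RightInverse (Psi G P) (Phi G hnorm) := by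
  intro z
  rcases eq_or_ne z 0 with rfl | hz
  · simp [Phi, Psi]
  have hPsi := Psi_ne_zero (G := G) hP hz
  rw [Phi, if_neg hPsi, hnorm_Psi hP hz (hpos _ hPsi) (huniq _ hPsi),
    exp_neg_log_wnorm_mulVec_Psi hz, smul_smul, mul_inv_cancel₀ (wnorm_pos hP hz).ne',
    one_smul]

end PhiPsi

theorem Phi_bijective_general {n : ℕ} (G P : Matrix (Fin n) (Fin n) ℝ)
    (hP : P.PosDef)
    (hnorm : (Fin n → ℝ) → ℝ)
    (hhnormpos : ∀ x : Fin n → ℝ, x ≠ 0 → 0 < hnorm x)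
    (hhnormdef : ∀ x : Fin n → ℝ, x ≠ 0 →
      wnorm P ((NormedSpace.exp ((-Real.log (hnorm x)) • G)).mulVec x) = 1)
    (hhnormuniq : ∀ x : Fin n → ℝ, x ≠ 0 → ∀ s : ℝ,
      wnorm P ((NormedSpace.exp ((-s) • G)).mulVec x) = 1 → s = Real.log (hnorm x)) :
    (∀ x : Fin n → ℝ, Psi G P (Phi G hnorm x) = x) ∧
    (∀ z : Fin n → ℝ, Phi G hnorm (Psi G P z) = z) :=
  ⟨Psi_leftInverse_Phi hhnormpos hhnormdef, Psi_rightInverse_Phi hP hhnormpos hhnormuniq⟩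

/-- `Φ_d` is a bijection of ℝⁿ with inverse `Ψ`: `Ψ ∘ Φ_d = id` and `Φ_d ∘ Ψ = id`,
for a strictly monotone dilation `d(s) = exp(sG)` and its canonical homogeneous
norm `hnorm = ‖·‖_d` induced by `‖x‖ = √(xᵀPx)`. -/
theorem Phi_bijective {n : ℕ} (G P : Matrix (Fin n) (Fin n) ℝ)
    (hPsym : Pᵀ = P) (hP : P.PosDef)
    (hnorm : (Fin n → ℝ) → ℝ)
    (hhnorm0 : hnorm 0 = 0)
    (hhnormpos : ∀ x : Fin n → ℝ, x ≠ 0 → 0 < hnorm x)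
    (hhnormdef : ∀ x : Fin n → ℝ, x ≠ 0 →
      wnorm P ((NormedSpace.exp ((-Real.log (hnorm x)) • G)).mulVec x) = 1)
    (hhnormuniq : ∀ x : Fin n → ℝ, x ≠ 0 → ∀ s : ℝ,
      wnorm P ((NormedSpace.exp ((-s) • G)).mulVec x) = 1 → s = Real.log (hnorm x))
    (hhom : ∀ (s : ℝ) (x : Fin n → ℝ),
      hnorm ((NormedSpace.exp (s • G)).mulVec x) = Real.exp s * hnorm x) :
    (∀ x : Fin n → ℝ, Psi G P (Phi G hnorm x) = x) ∧
    (∀ z : Fin n → ℝ, Phi G hnorm (Psi G P z) = z) :=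
  Phi_bijective_general G P hP hnorm hhnormpos hhnormdef hhnormuniq
end

section
/- Let Φ_d be the homogeneous coordinate homeomorphism associated to a strictly monotone linear dilation d. Define scalar multiplication on ℝⁿ by λ ⋆ x = sign(λ)·d(ln|λ|)·x (and 0 ⋆ x = 0). Then Φ_d(λ ⋆ x) = λ·Φ_d(x) for all λ ∈ ℝ and x ∈ ℝⁿ. -/
open Matrix

/-- Homogeneous scalar multiplication `λ ⋆ x = sign(λ)·d(ln|λ|)·x`, `0 ⋆ x = 0`. -/
noncomputable def hsmul {n : ℕ} (G : Matrix (Fin n) (Fin n) ℝ) (l : ℝ)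
    (x : Fin n → ℝ) : Fin n → ℝ :=
  if l = 0 then 0 else
    (if 0 < l then (1 : ℝ) else -1) • (NormedSpace.exp ((Real.log |l|) • G)).mulVec x

/-!
The dilations `d(s) = exp(s G)` form a one-parameter group, and `Φ_d` is odd and satisfies
`Φ_d(d(s) x) = eˢ Φ_d(x)`: the norm picks up the factor `eˢ`, and the compensating dilation
`d(-s)` hidden in `-ln ‖d(s) x‖_d` cancels `d(s)`. Since `λ ⋆ x = ± d(ln |λ|) x`, this gives
`Φ_d(λ ⋆ x) = ± |λ| Φ_d(x) = λ Φ_d(x)`.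
-/

section

variable {n : ℕ} (G : Matrix (Fin n) (Fin n) ℝ)

theorem exp_smul_mulVec_exp_smul_mulVec (s t : ℝ) (x : Fin n → ℝ) :
    NormedSpace.exp (s • G) *ᵥ (NormedSpace.exp (t • G) *ᵥ x) =
      NormedSpace.exp ((s + t) • G) *ᵥ x := by
  rw [mulVec_mulVec, add_smul,
    Matrix.exp_add_of_commute _ _ (((Commute.refl G).smul_left s).smul_right t)]

/-- At `x = 0` both sides vanish, so the case split in `Phi` is immaterial. -/
theorem Phi_eq (hnorm : (Fin n → ℝ) → ℝ) (x : Fin n → ℝ) :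
    Phi G hnorm x = hnorm x • NormedSpace.exp ((-Real.log (hnorm x)) • G) *ᵥ x := by
  unfold Phi
  split_ifs with hx
  · simp [hx]
  · rfl

theorem Phi_neg {hnorm : (Fin n → ℝ) → ℝ} (hneg : ∀ x, hnorm (-x) = hnorm x)
    (x : Fin n → ℝ) : Phi G hnorm (-x) = -Phi G hnorm x := by
  rw [Phi_eq, Phi_eq, hneg, mulVec_neg, smul_neg]

theorem Phi_exp_smul_mulVec {hnorm : (Fin n → ℝ) → ℝ}
    (hhom : ∀ (s : ℝ) (x : Fin n → ℝ),
      hnorm (NormedSpace.exp (s • G) *ᵥ x) = Real.exp s * hnorm x)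
    (s : ℝ) (x : Fin n → ℝ) :
    Phi G hnorm (NormedSpace.exp (s • G) *ᵥ x) = Real.exp s • Phi G hnorm x := by
  rw [Phi_eq, Phi_eq, hhom, exp_smul_mulVec_exp_smul_mulVec, mul_smul]
  rcases eq_or_ne (hnorm x) 0 with h | h
  · simp [h]
  · rw [Real.log_mul (Real.exp_ne_zero s) h, Real.log_exp, neg_add, neg_add_cancel_comm]

theorem hsmul_of_pos {l : ℝ} (hl : 0 < l) (x : Fin n → ℝ) :
    hsmul G l x = NormedSpace.exp (Real.log l • G) *ᵥ x := by
  simp [hsmul, hl, hl.ne', abs_of_pos hl]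

theorem hsmul_of_neg {l : ℝ} (hl : l < 0) (x : Fin n → ℝ) :
    hsmul G l x = -(NormedSpace.exp (Real.log (-l) • G) *ᵥ x) := by
  simp [hsmul, hl.not_gt, hl.ne, abs_of_neg hl]

end

theorem Phi_hsmul_general {n : ℕ} (G : Matrix (Fin n) (Fin n) ℝ)
    (hnorm : (Fin n → ℝ) → ℝ)
    (hhnormneg : ∀ x : Fin n → ℝ, hnorm (-x) = hnorm x)
    (hhom : ∀ (s : ℝ) (x : Fin n → ℝ),
      hnorm ((NormedSpace.exp (s • G)).mulVec x) = Real.exp s * hnorm x) :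
    ∀ (l : ℝ) (x : Fin n → ℝ), Phi G hnorm (hsmul G l x) = l • Phi G hnorm x := by
  intro l x
  rcases lt_trichotomy l 0 with hl | rfl | hl
  · rw [hsmul_of_neg G hl, Phi_neg G hhnormneg, Phi_exp_smul_mulVec G hhom,
      Real.exp_log (neg_pos.2 hl), neg_smul, neg_neg]
  · simp [hsmul, Phi]
  · rw [hsmul_of_pos G hl, Phi_exp_smul_mulVec G hhom, Real.exp_log hl]

/-- The homogeneous scalar multiplication is conjugate via `Φ_d` to ordinary scalar
multiplication: `Φ_d(λ ⋆ x) = λ·Φ_d(x)`. -/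
theorem Phi_hsmul {n : ℕ} (G : Matrix (Fin n) (Fin n) ℝ)
    (hnorm : (Fin n → ℝ) → ℝ)
    (hhnorm0 : hnorm 0 = 0)
    (hhnormpos : ∀ x : Fin n → ℝ, x ≠ 0 → 0 < hnorm x)
    (hhnormneg : ∀ x : Fin n → ℝ, hnorm (-x) = hnorm x)
    (hhom : ∀ (s : ℝ) (x : Fin n → ℝ),
      hnorm ((NormedSpace.exp (s • G)).mulVec x) = Real.exp s * hnorm x) :
    ∀ (l : ℝ) (x : Fin n → ℝ), Phi G hnorm (hsmul G l x) = l • Phi G hnorm x :=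
  Phi_hsmul_general G hnorm hhnormneg hhom
end

section
/- Let V : ℝⁿ → [0,∞) be continuous, positive definite, C¹ away from 0, and suppose along every solution of a differential inclusion ẋ ∈ F(x) one has V̇ ≤ −ρ·V^{1+μ/m} whenever x ≠ 0, with ρ > 0, m > 0 and μ < 0. Then every solution reaches the origin in finite time, with settling time bounded by T(x₀) ≤ (m/(ρ·|μ|))·V(x₀)^{−μ/m}. -/
/-!
Along a solution, `W(t) = V(x(t))^α` with `α = -μ/m > 0` satisfies `Ẇ ≤ -ρα` as long as `W > 0`:
raising to the power `α` exactly cancels the exponent `1 + μ/m = 1 - α` in the decay inequality.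
So `W` decreases at least linearly while positive, and once it reaches zero it cannot leave it
(leaving zero would require a positive stretch `(u, t]` after a last zero `u`, on which `W`
decreases). Hence `W` vanishes from time `W(0)/(ρα) = (m/(ρ|μ|)) V(x₀)^{-μ/m}` on.
-/

open Set

namespace Real

theorem exists_hasDerivAt_rpow_le {v : ℝ → ℝ} {D ρ α r : ℝ} (hα : 0 ≤ α) (hv : 0 < v r)
    (hD : HasDerivAt v D r) (hle : D ≤ -ρ * v r ^ (1 - α)) :
    ∃ D', HasDerivAt (fun s => v s ^ α) D' r ∧ D' ≤ -(ρ * α) := by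
  refine ⟨_, hD.rpow_const (Or.inl hv.ne'), ?_⟩
  have hcancel : v r ^ (1 - α) * v r ^ (α - 1) = 1 := by
    rw [← rpow_add hv, show 1 - α + (α - 1) = 0 by ring, rpow_zero]
  calc D * α * v r ^ (α - 1)
      ≤ -ρ * v r ^ (1 - α) * α * v r ^ (α - 1) := by gcongr
    _ = -(ρ * α) := by linear_combination (-ρ * α) * hcancel

end Real

section DecayToZero

variable {W : ℝ → ℝ} {c : ℝ}

theorem sub_le_neg_mul_of_pos_on_Ioo {s t : ℝ} (hst : s ≤ t) (hWc : ContinuousOn W (Icc s t))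
    (hd : ∀ r, 0 < W r → ∃ D, HasDerivAt W D r ∧ D ≤ -c)
    (hpos : ∀ r ∈ Ioo s t, 0 < W r) :
    W t - W s ≤ -c * (t - s) := by
  have hderiv : ∀ r ∈ interior (Icc s t), ∃ D, HasDerivAt W D r ∧ D ≤ -c := by
    rw [interior_Icc]
    exact fun r hr => hd r (hpos r hr)
  refine (convex_Icc s t).image_sub_le_mul_sub_of_deriv_le hWc (fun r hr => ?_) (fun r hr => ?_)
    s (left_mem_Icc.2 hst) t (right_mem_Icc.2 hst) hst
  · obtain ⟨D, hD, -⟩ := hderiv r hr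
    exact hD.differentiableAt.differentiableWithinAt
  · obtain ⟨D, hD, hDc⟩ := hderiv r hr
    exact hD.deriv ▸ hDc

theorem eq_zero_of_eq_zero_of_le (hc : 0 < c) (hWc : Continuous W) (hW0 : ∀ r, 0 ≤ W r)
    (hd : ∀ r, 0 < W r → ∃ D, HasDerivAt W D r ∧ D ≤ -c) {s t : ℝ} (hs : W s = 0) (hst : s ≤ t) :
    W t = 0 := by
  by_contra hne
  have hWt : 0 < W t := (hW0 t).lt_of_ne' hne
  have hK : IsCompact {r ∈ Icc s t | W r = 0} :=
    isCompact_Icc.of_isClosed_subset (isClosed_Icc.inter (isClosed_eq hWc continuous_const))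
      fun r hr => hr.1
  obtain ⟨u, ⟨⟨hsu, hut⟩, hWu⟩, hlast⟩ := hK.exists_isGreatest ⟨s, ⟨left_mem_Icc.2 hst, hs⟩⟩
  have hpos : ∀ r ∈ Ioo u t, 0 < W r := fun r hr =>
    (hW0 r).lt_of_ne' fun h => hr.1.not_ge (hlast ⟨⟨hsu.trans hr.1.le, hr.2.le⟩, h⟩)
  have := sub_le_neg_mul_of_pos_on_Ioo hut hWc.continuousOn hd hpos
  nlinarith

theorem eq_zero_of_add_div_le (hc : 0 < c) (hWc : Continuous W) (hW0 : ∀ r, 0 ≤ W r)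
    (hd : ∀ r, 0 < W r → ∃ D, HasDerivAt W D r ∧ D ≤ -c) {s t : ℝ} (ht : s + W s / c ≤ t) :
    W t = 0 := by
  by_cases hzero : ∃ r ∈ Icc s t, W r = 0
  · obtain ⟨r, hr, hWr⟩ := hzero
    exact eq_zero_of_eq_zero_of_le hc hWc hW0 hd hWr hr.2
  push Not at hzero
  have hst : s ≤ t := by linarith [div_nonneg (hW0 s) hc.le]
  have hWs : W s ≤ c * (t - s) := by
    rw [← div_le_iff₀' hc]
    linarith
  have := sub_le_neg_mul_of_pos_on_Ioo hst hWc.continuousOn hd fun r hr =>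
    (hW0 r).lt_of_ne' (hzero r (Ioo_subset_Icc_self hr))
  linarith [(hW0 t).lt_of_ne' (hzero t (right_mem_Icc.2 hst))]

end DecayToZero

/-- Finite-time stability from the homogeneous Lyapunov inequality with negative
degree: if along every solution of `ẋ ∈ F(x)` one has `V̇ ≤ −ρ V^{1+μ/m}` away from
the origin (with `ρ > 0`, `m > 0`, `μ < 0`), then every solution reaches the origin
within time `T(x₀) ≤ (m/(ρ|μ|)) V(x₀)^{−μ/m}`. -/
theorem finite_time_stability {E : Type*} [NormedAddCommGroup E] [NormedSpace ℝ E]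
    (F : E → Set E) (V : E → ℝ) (ρ m μ : ℝ)
    (hρ : 0 < ρ) (hm : 0 < m) (hμ : μ < 0)
    (hVc : Continuous V) (hVnonneg : ∀ x : E, 0 ≤ V x)
    (hVpd : ∀ x : E, V x = 0 ↔ x = 0)
    (hVC1 : ContDiffOn ℝ 1 V {x : E | x ≠ 0})
    (hdec : ∀ x x' : ℝ → E, (∀ t : ℝ, HasDerivAt x (x' t) t ∧ x' t ∈ F (x t)) →
      ∀ t : ℝ, x t ≠ 0 → ∀ D : ℝ, HasDerivAt (fun s => V (x s)) D t →
        D ≤ -ρ * Real.rpow (V (x t)) (1 + μ / m)) :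
    ∀ x x' : ℝ → E, (∀ t : ℝ, HasDerivAt x (x' t) t ∧ x' t ∈ F (x t)) →
      ∀ t : ℝ, (m / (ρ * |μ|)) * Real.rpow (V (x 0)) (-μ / m) ≤ t → x t = 0 := by
  intro x x' hsol t ht
  set α := -μ / m with hα
  have hα0 : 0 < α := div_pos (neg_pos.2 hμ) hm
  have hW0 : ∀ r, V (x r) ^ α = 0 ↔ x r = 0 := fun r => by
    rw [Real.rpow_eq_zero (hVnonneg _) hα0.ne', hVpd]
  have hd : ∀ r, 0 < V (x r) ^ α → ∃ D, HasDerivAt (fun s => V (x s) ^ α) D r ∧ D ≤ -(ρ * α) := by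
    intro r hr
    have hxr : x r ≠ 0 := mt (hW0 r).2 hr.ne'
    have hVx : HasDerivAt (fun s => V (x s)) (fderiv ℝ V (x r) (x' r)) r :=
      ((hVC1.contDiffAt (isOpen_ne.mem_nhds hxr)).differentiableAt one_ne_zero).hasFDerivAt
        |>.comp_hasDerivAt r (hsol r).1
    refine Real.exists_hasDerivAt_rpow_le hα0.le ((hVnonneg _).lt_of_ne' (mt (hVpd _).1 hxr)) hVx ?_
    simpa only [hα, Real.rpow_eq_pow, sub_neg_eq_add, neg_div, neg_neg] using
      hdec x x' hsol r hxr _ hVx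
  have hx : Continuous x := continuous_iff_continuousAt.2 fun r => (hsol r).1.continuousAt
  have hsettle : 0 + V (x 0) ^ α / (ρ * α) ≤ t := by
    convert ht using 1
    rw [zero_add, abs_of_neg hμ, Real.rpow_eq_pow, hα]
    field_simp
  exact (hW0 t).1 (eq_zero_of_add_div_le (mul_pos hρ hα0)
    ((Real.continuous_rpow_const hα0.le).comp (hVc.comp hx))
    (fun r => Real.rpow_nonneg (hVnonneg _) α) hd hsettle)
end
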